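/- arXiv:2501.05305 — 3 statements merged into one kernel-verified Lean document; each statement's English description precedes it below -/
import Mathlib

section
/- Let 0 < γ < ϖ and let μ ∈ C¹((0,∞)) ∩ L¹((0,∞)) satisfy μ ≥ 0 and μ' + ϖμ ≤ 0 on (0,∞). Let φ : (−∞,0] → ℝ be measurable with ∫_{−∞}^0 e^{γ r} φ(r)² dr < ∞, and define (Jφ)(s) = ∫_{−s}^0 φ(r) dr for s > 0. Then ∫_0^∞ μ(s)·(Jφ)(s)² ds ≤ K_μ · ∫_{−∞}^0 e^{γ r} φ(r)² dr, where K_μ = e^{γ} ∫_0^1 μ(s) ds + μ(1)·e^{ϖ}·(ϖ − γ)^{−2}. -/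
open Real Set MeasureTheory

lemma aux_CS (γ : ℝ) (hγ : 0 < γ) (φ : ℝ → ℝ) (hφm : Measurable φ)
    (hφint : IntegrableOn (fun r => Real.exp (γ * r) * φ r ^ 2) (Set.Iic (0:ℝ)))
    (s : ℝ) (hs : 0 < s) :
    (∫ r in Set.Ioc (-s) (0:ℝ), φ r) ^ 2 ≤
      s * Real.exp (γ * s) * ∫ r in Set.Iic (0:ℝ), Real.exp (γ * r) * φ r ^ 2 := by
  set I := ∫ r in Set.Iic (0:ℝ), Real.exp (γ * r) * φ r ^ 2 with hIdef
  set ν := volume.restrict (Set.Ioc (-s) (0:ℝ)) with hν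
  haveI : IsFiniteMeasure ν := by
    constructor
    rw [Measure.restrict_apply_univ]
    exact measure_Ioc_lt_top
  set f : ℝ → ℝ := fun r => Real.exp (-(γ/2) * r) with hf
  set g : ℝ → ℝ := fun r => Real.exp ((γ/2) * r) * |φ r| with hg
  have hfm : MemLp f (ENNReal.ofReal 2) ν := by
    refine MemLp.mono_exponent (q := ⊤) ?_ le_top
    apply memLp_top_of_bound ((Continuous.aestronglyMeasurable (by continuity))) (Real.exp (γ/2 * s))
    refine (ae_restrict_iff' measurableSet_Ioc).2 (Filter.Eventually.of_forall fun r hr => ?_)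
    rw [Real.norm_eq_abs, abs_of_pos (Real.exp_pos _)]
    apply Real.exp_le_exp.2
    nlinarith [hr.1]
  have heq : ∀ r, Real.exp (γ * r) * φ r ^ 2 = g r ^ 2 := fun r => by
    rw [hg, mul_pow, sq_abs, sq (Real.exp _), ← Real.exp_add]
    ring_nf
  have hgsq : Integrable (fun r => g r ^ 2) ν := by
    have h1 : IntegrableOn (fun r => Real.exp (γ * r) * φ r ^ 2) (Set.Ioc (-s) (0:ℝ)) :=
      hφint.mono_set Set.Ioc_subset_Iic_self
    exact h1.congr_fun (fun r _ => heq r) measurableSet_Ioc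
  have hgm : MemLp g (ENNReal.ofReal 2) ν := by
    rw [show ENNReal.ofReal 2 = 2 by norm_num]
    refine (memLp_two_iff_integrable_sq ?_).2 hgsq
    exact (Continuous.aestronglyMeasurable (by continuity)).mul hφm.abs.aestronglyMeasurable
  have hpq : Real.HolderConjugate 2 2 := Real.HolderConjugate.two_two
  have hH := integral_mul_le_Lp_mul_Lq_of_nonneg hpq
    (Filter.Eventually.of_forall fun r => (Real.exp_pos _).le)
    (Filter.Eventually.of_forall fun r => mul_nonneg (Real.exp_pos _).le (abs_nonneg _))
    hfm hgm
  set Y := ∫ a, f a ^ 2 ∂ν with hYdef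
  set Z := ∫ a, g a ^ 2 ∂ν with hZdef
  have hYr : (∫ a, f a ^ (2:ℝ) ∂ν) = Y :=
    integral_congr_ae (Filter.Eventually.of_forall fun r => by simp [Real.rpow_two])
  have hZr : (∫ a, g a ^ (2:ℝ) ∂ν) = Z :=
    integral_congr_ae (Filter.Eventually.of_forall fun r => by simp [Real.rpow_two])
  rw [hYr, hZr] at hH
  have hY0 : 0 ≤ Y := integral_nonneg fun r => sq_nonneg _
  have hZ0 : 0 ≤ Z := integral_nonneg fun r => sq_nonneg _
  have hfg : ∀ r, f r * g r = |φ r| := fun r => by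
    rw [hf, hg, ← mul_assoc, ← Real.exp_add, show -(γ/2)*r + (γ/2)*r = 0 by ring,
      Real.exp_zero, one_mul]
  have habs : |∫ r, φ r ∂ν| ≤ ∫ r, |φ r| ∂ν := by
    simpa [Real.norm_eq_abs] using norm_integral_le_integral_norm (μ := ν) φ
  have hhalf : ∀ W : ℝ, 0 ≤ W → (W ^ (1/(2:ℝ)))^2 = W := fun W hW => by
    rw [← Real.rpow_natCast (W ^ (1/(2:ℝ))) 2, ← Real.rpow_mul hW]
    norm_num
  have hYle : Y ≤ s * Real.exp (γ * s) := by
    have hb : ∀ r ∈ Set.Ioc (-s) (0:ℝ), f r ^ 2 ≤ Real.exp (γ * s) := fun r hr => by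
      rw [hf]
      rw [sq, ← Real.exp_add]
      apply Real.exp_le_exp.2
      nlinarith [hr.1]
    have hconst : IntegrableOn (fun _ : ℝ => Real.exp (γ*s)) (Set.Ioc (-s) 0) :=
      integrableOn_const measure_Ioc_lt_top.ne
    have hfint : IntegrableOn (fun r => f r ^ 2) (Set.Ioc (-s) 0) := by
      have hfc : Continuous f := Real.continuous_exp.comp (continuous_const.mul continuous_id)
      exact (hfc.pow 2).integrableOn_Ioc
    calc Y ≤ ∫ _ in Set.Ioc (-s) (0:ℝ), Real.exp (γ*s) :=
          setIntegral_mono_on hfint hconst measurableSet_Ioc hb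
      _ = s * Real.exp (γ*s) := by
          rw [setIntegral_const, measureReal_def, Real.volume_Ioc, smul_eq_mul]
          congr 1
          rw [show (0:ℝ) - -s = s by ring, ENNReal.toReal_ofReal hs.le]
  have hZle : Z ≤ I := by
    have h1 : Z = ∫ r in Set.Ioc (-s) (0:ℝ), Real.exp (γ * r) * φ r ^ 2 :=
      integral_congr_ae (Filter.Eventually.of_forall fun r => (heq r).symm)
    rw [h1, hIdef]
    exact setIntegral_mono_set hφint
      (Filter.Eventually.of_forall fun r => mul_nonneg (Real.exp_pos _).le (sq_nonneg _))
      (HasSubset.Subset.eventuallyLE Set.Ioc_subset_Iic_self)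
  calc (∫ r, φ r ∂ν)^2
      = |∫ r, φ r ∂ν|^2 := (sq_abs _).symm
    _ ≤ (∫ r, |φ r| ∂ν)^2 := pow_le_pow_left₀ (abs_nonneg _) habs 2
    _ = (∫ r, f r * g r ∂ν)^2 := by
        rw [integral_congr_ae (Filter.Eventually.of_forall fun r => (hfg r).symm)]
    _ ≤ ((Y^(1/(2:ℝ))) * (Z^(1/(2:ℝ))))^2 :=
        pow_le_pow_left₀ (integral_nonneg fun r => by rw [hfg]; exact abs_nonneg _) hH 2
    _ = Y * Z := by rw [mul_pow, hhalf Y hY0, hhalf Z hZ0]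
    _ ≤ (s * Real.exp (γ*s)) * I := mul_le_mul hYle hZle hZ0 (by positivity)

lemma aux_exp_int (a : ℝ) (ha : 0 < a) :
    IntegrableOn (fun s => s * Real.exp (-(a*s))) (Set.Ioi (1:ℝ)) ∧
      ∫ s in Set.Ioi (1:ℝ), s * Real.exp (-(a*s)) = (1/a + 1/a^2) * Real.exp (-a) := by
  have hF : ∀ x ∈ Set.Ici (1:ℝ), HasDerivAt (fun s => -((s/a + 1/a^2) * Real.exp (-(a*s))))
      (x * Real.exp (-(a*x))) x := by
    intro x _
    have h1 : HasDerivAt (fun s : ℝ => s/a + 1/a^2) (1/a) x := by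
      have hd := (hasDerivAt_id x).div_const a
      simp only [id] at hd
      exact hd.add_const (1/a^2)
    have h0 : HasDerivAt (fun s : ℝ => -(a*s)) (-a) x := by
      exact ((hasDerivAt_id x).const_mul a).neg.congr_deriv (by ring)
    have h2 : HasDerivAt (fun s : ℝ => Real.exp (-(a*s))) (Real.exp (-(a*x)) * (-a)) x := h0.exp
    have h3 := (h1.mul h2).neg
    refine h3.congr_deriv ?_
    field_simp
    ring
  have hpos : ∀ x ∈ Set.Ioi (1:ℝ), 0 ≤ x * Real.exp (-(a*x)) := fun x hx =>
    mul_nonneg (by have := Set.mem_Ioi.1 hx; linarith) (Real.exp_pos _).le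
  have tc : Filter.Tendsto (fun s : ℝ => a * s) Filter.atTop Filter.atTop :=
    Filter.Tendsto.const_mul_atTop ha Filter.tendsto_id
  have t0 : Filter.Tendsto (fun y : ℝ => y * Real.exp (-y)) Filter.atTop (nhds 0) := by
    simpa using tendsto_pow_mul_exp_neg_atTop_nhds_zero 1
  have t1 : Filter.Tendsto (fun s : ℝ => (a*s) * Real.exp (-(a*s))) Filter.atTop (nhds 0) :=
    t0.comp tc
  have t2 : Filter.Tendsto (fun s : ℝ => Real.exp (-(a*s))) Filter.atTop (nhds 0) :=
    Real.tendsto_exp_neg_atTop_nhds_zero.comp tc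
  have tF : Filter.Tendsto (fun s => -((s/a + 1/a^2) * Real.exp (-(a*s)))) Filter.atTop (nhds 0) := by
    have hrw : (fun s : ℝ => -((s/a + 1/a^2) * Real.exp (-(a*s))))
        = fun s => -((1/a^2) * ((a*s) * Real.exp (-(a*s))) + (1/a^2) * Real.exp (-(a*s))) := by
      funext s
      field_simp
    have hT := ((t1.const_mul (1/a^2)).add (t2.const_mul (1/a^2))).neg
    have h0' : -((1/a^2)*(0:ℝ) + (1/a^2)*0) = 0 := by ring
    rw [hrw, ← h0']
    exact hT
  refine ⟨integrableOn_Ioi_deriv_of_nonneg' hF hpos tF, ?_⟩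
  have hv := integral_Ioi_of_hasDerivAt_of_nonneg' hF hpos tF
  rw [hv, mul_one]
  ring

theorem stmt_8 (ϖ γ : ℝ) (hγ : 0 < γ) (hγϖ : γ < ϖ) (μ μ' : ℝ → ℝ)
    (hderiv : ∀ s ∈ Set.Ioi (0:ℝ), HasDerivAt μ (μ' s) s)
    (hcont : ContinuousOn μ' (Set.Ioi (0:ℝ)))
    (hint : IntegrableOn μ (Set.Ioi (0:ℝ)))
    (hnonneg : ∀ s ∈ Set.Ioi (0:ℝ), 0 ≤ μ s)
    (hineq : ∀ s ∈ Set.Ioi (0:ℝ), μ' s + ϖ * μ s ≤ 0)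
    (φ : ℝ → ℝ) (hφm : Measurable φ)
    (hφint : IntegrableOn (fun r => Real.exp (γ * r) * φ r ^ 2) (Set.Iic (0:ℝ))) :
    ∫ s in Set.Ioi (0:ℝ), μ s * (∫ r in Set.Ioc (-s) (0:ℝ), φ r) ^ 2 ≤
      (Real.exp γ * ∫ s in Set.Ioc (0:ℝ) 1, μ s + μ 1 * Real.exp ϖ * ((ϖ - γ) ^ 2)⁻¹) *
        ∫ r in Set.Iic (0:ℝ), Real.exp (γ * r) * φ r ^ 2 := by
  have hI0 : 0 ≤ ∫ r in Set.Iic (0:ℝ), Real.exp (γ * r) * φ r ^ 2 :=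
    setIntegral_nonneg measurableSet_Iic fun r _ => mul_nonneg (Real.exp_pos _).le (sq_nonneg _)
  set I := ∫ r in Set.Iic (0:ℝ), Real.exp (γ * r) * φ r ^ 2 with hIdef
  set a := ϖ - γ with ha
  have ha0 : 0 < a := by rw [ha]; linarith
  set c := μ 1 * Real.exp ϖ with hc
  have hμ1 : 0 ≤ μ 1 := hnonneg 1 (by norm_num)
  have hc0 : 0 ≤ c := mul_nonneg hμ1 (Real.exp_pos _).le
  set g : ℝ → ℝ := fun s => if s ≤ 1 then Real.exp γ * μ s else c * (s * Real.exp (-(a * s)))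
    with hgdef
  -- derivative of the auxiliary exponential-weighted function
  have hD : ∀ t ∈ Set.Ioi (0:ℝ), HasDerivAt (fun t => Real.exp (ϖ*t) * μ t)
      (Real.exp (ϖ*t) * (μ' t + ϖ * μ t)) t := by
    intro t ht
    have h0 : HasDerivAt (fun t : ℝ => ϖ * t) ϖ t := by
      simpa using (hasDerivAt_id t).const_mul ϖ
    have h1 : HasDerivAt (fun t : ℝ => Real.exp (ϖ*t)) (Real.exp (ϖ*t) * ϖ) t := h0.exp
    have h2 := h1.mul (hderiv t ht)
    refine h2.congr_deriv ?_
    ring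
  have hanti : AntitoneOn (fun t => Real.exp (ϖ*t) * μ t) (Set.Ici 1) := by
    have hIci : ∀ t : ℝ, t ∈ Set.Ici (1:ℝ) → t ∈ Set.Ioi (0:ℝ) := fun t ht => by
      simp only [Set.mem_Ici] at ht
      exact Set.mem_Ioi.2 (by linarith)
    apply antitoneOn_of_deriv_nonpos (convex_Ici 1)
    · exact fun t ht => (hD t (hIci t ht)).continuousAt.continuousWithinAt
    · rw [interior_Ici]
      exact fun t ht =>
        (hD t (hIci t (Set.mem_Ioi.1 ht).le)).differentiableAt.differentiableWithinAt
    · intro t ht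
      rw [interior_Ici] at ht
      have ht0 : t ∈ Set.Ioi (0:ℝ) := hIci t (Set.mem_Ioi.1 ht).le
      rw [(hD t ht0).deriv]
      exact mul_nonpos_of_nonneg_of_nonpos (Real.exp_pos _).le (hineq t ht0)
  -- pointwise bound
  have hpt : ∀ s ∈ Set.Ioi (0:ℝ), μ s * (∫ r in Set.Ioc (-s) (0:ℝ), φ r) ^ 2 ≤ g s * I := by
    intro s hs
    have hs0 : (0:ℝ) < s := hs
    have hCS := aux_CS γ hγ φ hφm hφint s hs0
    have hμs : 0 ≤ μ s := hnonneg s hs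
    have step1 : μ s * (∫ r in Set.Ioc (-s) (0:ℝ), φ r) ^ 2 ≤ μ s * (s * Real.exp (γ*s) * I) :=
      mul_le_mul_of_nonneg_left hCS hμs
    by_cases h1 : s ≤ 1
    · have hse : s * Real.exp (γ*s) ≤ Real.exp γ := by
        calc s * Real.exp (γ*s) ≤ 1 * Real.exp γ :=
              mul_le_mul h1 (Real.exp_le_exp.2 (by nlinarith)) (Real.exp_pos _).le zero_le_one
          _ = Real.exp γ := one_mul _
      have hgs : g s = Real.exp γ * μ s := if_pos h1
      rw [hgs]
      refine step1.trans ?_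
      nlinarith [mul_nonneg (sub_nonneg.2 hse) (mul_nonneg hμs hI0)]
    · push_neg at h1
      have hk : Real.exp (ϖ*s) * μ s ≤ Real.exp (ϖ*1) * μ 1 :=
        hanti Set.self_mem_Ici (Set.mem_Ici.2 h1.le) h1.le
      have hμs' : μ s ≤ c * Real.exp (-(ϖ*s)) := by
        have h2 := mul_le_mul_of_nonneg_left hk (Real.exp_pos (-(ϖ*s))).le
        calc μ s = Real.exp (-(ϖ*s)) * (Real.exp (ϖ*s) * μ s) := by
              rw [← mul_assoc, ← Real.exp_add]
              simp
          _ ≤ Real.exp (-(ϖ*s)) * (Real.exp (ϖ*1) * μ 1) := h2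
          _ = c * Real.exp (-(ϖ*s)) := by rw [hc, mul_one]; ring
      have hgs : g s = c * (s * Real.exp (-(a*s))) := if_neg (not_le.2 h1)
      rw [hgs]
      refine step1.trans ?_
      have hnn : 0 ≤ s * Real.exp (γ*s) * I := mul_nonneg (mul_nonneg hs0.le (Real.exp_pos _).le) hI0
      calc μ s * (s * Real.exp (γ*s) * I)
          ≤ (c * Real.exp (-(ϖ*s))) * (s * Real.exp (γ*s) * I) :=
            mul_le_mul_of_nonneg_right hμs' hnn
        _ = c * (s * Real.exp (-(a*s))) * I := by
            rw [show -(a*s) = γ*s + -(ϖ*s) by rw [ha]; ring, Real.exp_add]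
            ring
  -- integrability of g
  obtain ⟨hint1, hval1⟩ := aux_exp_int a ha0
  have hg1 : IntegrableOn g (Set.Ioc (0:ℝ) 1) := by
    refine IntegrableOn.congr_fun
      ((hint.mono_set Set.Ioc_subset_Ioi_self).const_mul (Real.exp γ))
      (fun s hs => ?_) measurableSet_Ioc
    rw [hgdef]
    simp only
    rw [if_pos hs.2]
  have hg2 : IntegrableOn g (Set.Ioi (1:ℝ)) := by
    refine IntegrableOn.congr_fun (hint1.const_mul c) (fun s hs => ?_) measurableSet_Ioi
    rw [hgdef]
    simp only
    rw [if_neg (not_le.2 hs)]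
  have hdisj : Disjoint (Set.Ioc (0:ℝ) 1) (Set.Ioi 1) := by
    rw [Set.disjoint_left]
    intro x hx hx'
    exact absurd hx.2 (not_le.2 hx')
  have hgint : IntegrableOn g (Set.Ioi (0:ℝ)) := by
    rw [← Set.Ioc_union_Ioi_eq_Ioi (zero_le_one : (0:ℝ) ≤ 1)]
    exact hg1.union hg2
  have hsum : ∫ s in Set.Ioi (0:ℝ), g s
      = (∫ s in Set.Ioc (0:ℝ) 1, g s) + ∫ s in Set.Ioi (1:ℝ), g s := by
    rw [← Set.Ioc_union_Ioi_eq_Ioi (zero_le_one : (0:ℝ) ≤ 1)]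
    exact setIntegral_union hdisj measurableSet_Ioi hg1 hg2
  have h1val : ∫ s in Set.Ioc (0:ℝ) 1, g s = Real.exp γ * ∫ s in Set.Ioc (0:ℝ) 1, μ s := by
    rw [setIntegral_congr_fun measurableSet_Ioc
      (fun s hs => by rw [hgdef]; simp only; rw [if_pos hs.2] :
        Set.EqOn g (fun s => Real.exp γ * μ s) (Set.Ioc (0:ℝ) 1)), integral_const_mul]
  have h2val : ∫ s in Set.Ioi (1:ℝ), g s = c * ((1/a + 1/a^2) * Real.exp (-a)) := by
    rw [setIntegral_congr_fun measurableSet_Ioi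
      (fun s hs => by rw [hgdef]; simp only; rw [if_neg (not_le.2 hs)] :
        Set.EqOn g (fun s => c * (s * Real.exp (-(a*s)))) (Set.Ioi (1:ℝ))),
      integral_const_mul, hval1]
  have key : (1/a + 1/a^2) * Real.exp (-a) ≤ (a^2)⁻¹ := by
    have hq : 1/a + 1/a^2 = (a+1)/a^2 := by field_simp
    rw [Real.exp_neg, hq, div_mul_eq_mul_div, div_le_iff₀ (by positivity : (0:ℝ) < a^2)]
    have h2 : (a^2:ℝ)⁻¹ * a^2 = 1 := inv_mul_cancel₀ (by positivity)
    rw [h2, ← div_eq_mul_inv, div_le_one (Real.exp_pos a)]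
    linarith [Real.add_one_le_exp a]
  have hgK : ∫ s in Set.Ioi (0:ℝ), g s
      ≤ Real.exp γ * (∫ s in Set.Ioc (0:ℝ) 1, μ s) + c * (a^2)⁻¹ := by
    rw [hsum, h1val, h2val]
    have := mul_le_mul_of_nonneg_left key hc0
    linarith
  calc ∫ s in Set.Ioi (0:ℝ), μ s * (∫ r in Set.Ioc (-s) (0:ℝ), φ r) ^ 2
      ≤ ∫ s in Set.Ioi (0:ℝ), g s * I := by
        apply integral_mono_of_nonneg
        · exact (ae_restrict_iff' measurableSet_Ioi).2 (Filter.Eventually.of_forall fun s hs =>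
            mul_nonneg (hnonneg s hs) (sq_nonneg _))
        · exact hgint.mul_const I
        · exact (ae_restrict_iff' measurableSet_Ioi).2 (Filter.Eventually.of_forall hpt)
    _ = (∫ s in Set.Ioi (0:ℝ), g s) * I := integral_mul_const I g
    _ ≤ (Real.exp γ * (∫ s in Set.Ioc (0:ℝ) 1, μ s) + c * (a^2)⁻¹) * I :=
        mul_le_mul_of_nonneg_right hgK hI0
    _ ≤ (Real.exp γ * ∫ s in Set.Ioc (0:ℝ) 1, μ s + c * (a^2)⁻¹) * I := by
        apply mul_le_mul_of_nonneg_right ?_ hI0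
        have hCint : ∫ s in Set.Ioc (0:ℝ) 1, (μ s + c * (a^2)⁻¹)
            = (∫ s in Set.Ioc (0:ℝ) 1, μ s) + c * (a^2)⁻¹ := by
          rw [integral_add (hint.mono_set Set.Ioc_subset_Ioi_self)
            (integrableOn_const measure_Ioc_lt_top.ne),
            setIntegral_const, measureReal_def, Real.volume_Ioc, smul_eq_mul]
          norm_num
        rw [hCint]
        have hexp1 : (1:ℝ) ≤ Real.exp γ := by
          rw [← Real.exp_zero]
          exact Real.exp_le_exp.2 hγ.le
        have hC0 : 0 ≤ c * (a^2)⁻¹ := mul_nonneg hc0 (inv_nonneg.2 (sq_nonneg a))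
        nlinarith [mul_nonneg (sub_nonneg.2 hexp1) hC0]
end

section
/- Let ϖ > γ > 0 and let μ ∈ C¹((0,∞)) ∩ L¹((0,∞)) satisfy μ ≥ 0 and μ' + ϖμ ≤ 0; set k(t) = ∫_t^∞ μ(s) ds and M₁ = ∫_0^∞ μ(s) ds. Let φ : (−∞,0] → ℝ be measurable with ‖φ‖² := ∫_{−∞}^0 e^{γ s} φ(s)² ds < ∞. Then for every t > 0: ∫_{−∞}^0 k(t−s)·|φ(s)| ds ≤ (M₁^{1/2} · μ(t)^{1/2} / (ϖ^{1/2}·(ϖ−γ)^{1/2})) · ‖φ‖. -/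
open Real Set MeasureTheory

lemma aux_int_exp_Ioi {b : ℝ} (hb : 0 < b) (u : ℝ) :
    ∫ x in Ioi u, Real.exp (-(b * x)) = Real.exp (-(b * u)) / b := by
  have h := integral_comp_mul_left_Ioi (fun x => Real.exp (-x)) u hb
  simp only [smul_eq_mul] at h
  rw [h, integral_exp_neg_Ioi]
  ring

lemma aux_int_exp_Iic {b : ℝ} (hb : 0 < b) :
    ∫ x in Iic (0:ℝ), Real.exp (b * x) = 1 / b := by
  have h := integral_comp_neg_Iic (0:ℝ) (fun x => Real.exp (-(b * x)))
  simp only [mul_neg, neg_neg, neg_zero] at h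
  rw [h, aux_int_exp_Ioi hb, mul_zero, neg_zero, Real.exp_zero]

lemma aux_integrableOn_exp_Iic {b : ℝ} (hb : 0 < b) :
    IntegrableOn (fun x : ℝ => Real.exp (b * x)) (Iic (0:ℝ)) := by
  have h := (Measure.measurePreserving_neg (volume : Measure ℝ)).integrableOn_comp_preimage
      (MeasurableEquiv.neg ℝ).measurableEmbedding
      (f := fun x : ℝ => Real.exp (b * x)) (s := Iic (0:ℝ))
  refine h.1 ?_
  have hpre : (Neg.neg ⁻¹' Iic (0:ℝ)) = Ici 0 := by ext x; simp
  have hco : ((fun x : ℝ => Real.exp (b * x)) ∘ Neg.neg) = fun x : ℝ => Real.exp (-b * x) := by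
    funext x; simp [Function.comp, mul_comm, neg_mul, mul_neg]
  rw [hpre, hco, integrableOn_Ici_iff_integrableOn_Ioi]
  exact exp_neg_integrableOn_Ioi 0 hb

theorem stmt_12 (ϖ γ : ℝ) (hγ : 0 < γ) (hγϖ : γ < ϖ) (μ μ' : ℝ → ℝ)
    (hderiv : ∀ s ∈ Set.Ioi (0:ℝ), HasDerivAt μ (μ' s) s)
    (hcont : ContinuousOn μ' (Set.Ioi (0:ℝ)))
    (hint : IntegrableOn μ (Set.Ioi (0:ℝ)))
    (hnonneg : ∀ s ∈ Set.Ioi (0:ℝ), 0 ≤ μ s)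
    (hineq : ∀ s ∈ Set.Ioi (0:ℝ), μ' s + ϖ * μ s ≤ 0)
    (k : ℝ → ℝ) (hk : ∀ t, 0 < t → k t = ∫ s in Set.Ioi t, μ s)
    (M₁ : ℝ) (hM₁ : M₁ = ∫ s in Set.Ioi (0:ℝ), μ s)
    (φ : ℝ → ℝ) (hφm : Measurable φ)
    (hφint : IntegrableOn (fun s => Real.exp (γ * s) * φ s ^ 2) (Set.Iic (0:ℝ))) :
    ∀ t : ℝ, 0 < t →
      ∫ s in Set.Iic (0:ℝ), k (t - s) * |φ s| ≤
        (Real.sqrt M₁ * Real.sqrt (μ t) / (Real.sqrt ϖ * Real.sqrt (ϖ - γ))) *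
          Real.sqrt (∫ s in Set.Iic (0:ℝ), Real.exp (γ * s) * φ s ^ 2) := by
  intro t ht
  have hϖ : 0 < ϖ := hγ.trans hγϖ
  have hϖγ : 0 < ϖ - γ := sub_pos.2 hγϖ
  have hμt : 0 ≤ μ t := hnonneg t ht
  have hM₁0 : 0 ≤ M₁ := by
    rw [hM₁]; exact setIntegral_nonneg measurableSet_Ioi hnonneg
  -- Step A: decay of μ
  have hA : ∀ b, t ≤ b → μ b * Real.exp (ϖ * b) ≤ μ t * Real.exp (ϖ * t) := by
    have hanti : AntitoneOn (fun s => μ s * Real.exp (ϖ * s)) (Ici t) := by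
      have hintIci : interior (Ici t) = Ioi t := interior_Ici
      have he : ∀ x : ℝ, HasDerivAt (fun y : ℝ => Real.exp (ϖ * y)) (Real.exp (ϖ * x) * ϖ) x :=
        fun x => by simpa using ((hasDerivAt_id x).const_mul ϖ).exp
      apply antitoneOn_of_deriv_nonpos (convex_Ici t)
      · intro x hx
        have hx0 : x ∈ Ioi (0:ℝ) := lt_of_lt_of_le ht hx
        exact ((hderiv x hx0).mul (he x)).continuousAt.continuousWithinAt
      · intro x hx
        rw [hintIci] at hx
        have hx0 : x ∈ Ioi (0:ℝ) := ht.trans hx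
        exact ((hderiv x hx0).mul (he x)).differentiableAt.differentiableWithinAt
      · intro x hx
        rw [hintIci] at hx
        have hx0 : x ∈ Ioi (0:ℝ) := ht.trans hx
        have hd := (hderiv x hx0).mul (he x)
        rw [(show HasDerivAt (fun s => μ s * Real.exp (ϖ * s)) _ x from hd).deriv]
        have h1 := hineq x hx0
        have h2 := (Real.exp_pos (ϖ * x)).le
        nlinarith
    exact fun b hb => hanti self_mem_Ici hb hb
  -- Step B: tail bound
  have hB : ∀ u, t ≤ u → k u ≤ μ t * Real.exp (ϖ * t) * (Real.exp (-(ϖ * u)) / ϖ) := by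
    intro u hu
    have hu0 : (0:ℝ) < u := ht.trans_le hu
    rw [hk u hu0]
    have hgint : IntegrableOn (fun x => μ t * Real.exp (ϖ * t) * Real.exp (-(ϖ * x))) (Ioi u) := by
      have h := (exp_neg_integrableOn_Ioi u hϖ).const_mul (μ t * Real.exp (ϖ * t))
      simp only [neg_mul] at h
      exact h
    calc ∫ x in Ioi u, μ x
        ≤ ∫ x in Ioi u, μ t * Real.exp (ϖ * t) * Real.exp (-(ϖ * x)) := by
          refine setIntegral_mono_on (hint.mono_set (Ioi_subset_Ioi hu0.le)) hgint
            measurableSet_Ioi ?_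
          intro x hx
          have hxt : t ≤ x := hu.trans (le_of_lt hx)
          have h1 := hA x hxt
          have h2 := Real.exp_pos (ϖ * x)
          rw [Real.exp_neg]
          calc μ x = μ x * Real.exp (ϖ * x) * (Real.exp (ϖ * x))⁻¹ := by field_simp
            _ ≤ μ t * Real.exp (ϖ * t) * (Real.exp (ϖ * x))⁻¹ :=
                mul_le_mul_of_nonneg_right h1 (inv_nonneg.2 h2.le)
      _ = μ t * Real.exp (ϖ * t) * (Real.exp (-(ϖ * u)) / ϖ) := by
          rw [integral_const_mul, aux_int_exp_Ioi hϖ]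
  -- k is nonnegative and bounded by M₁, antitone on [t,∞)
  have hk0 : ∀ u, 0 < u → 0 ≤ k u := fun u hu => by
    rw [hk u hu]
    exact setIntegral_nonneg measurableSet_Ioi fun x hx => hnonneg x (hu.trans hx)
  have hkM : ∀ u, 0 < u → k u ≤ M₁ := by
    intro u hu
    rw [hk u hu, hM₁]
    refine setIntegral_mono_set hint ?_ (HasSubset.Subset.eventuallyLE (Ioi_subset_Ioi hu.le))
    exact (ae_restrict_iff' measurableSet_Ioi).2 (Filter.Eventually.of_forall hnonneg)
  have hkanti : ∀ u v, t ≤ u → u ≤ v → k v ≤ k u := by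
    intro u v hu huv
    have hu0 : (0:ℝ) < u := ht.trans_le hu
    rw [hk u hu0, hk v (hu0.trans_le huv)]
    refine setIntegral_mono_set (hint.mono_set (Ioi_subset_Ioi hu0.le)) ?_
      (HasSubset.Subset.eventuallyLE (Ioi_subset_Ioi huv))
    exact (ae_restrict_iff' measurableSet_Ioi).2
      (Filter.Eventually.of_forall fun x hx => hnonneg x (hu0.trans hx))
  -- monotone extension K
  set K : ℝ → ℝ := fun s => k (t - min s 0) with hK
  have hKmono : Monotone K := by
    intro s₁ s₂ h
    have h1 : min s₂ 0 ≤ 0 := min_le_right _ _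
    exact hkanti (t - min s₂ 0) (t - min s₁ 0) (by linarith)
      (by have := min_le_min h (le_refl (0:ℝ)); linarith)
  have hKmeas : Measurable K := hKmono.measurable
  have hKeq : ∀ s : ℝ, s ≤ 0 → K s = k (t - s) := fun s hs => by
    simp only [hK, min_eq_left hs]
  have hK0 : ∀ s : ℝ, 0 ≤ K s := fun s =>
    hk0 _ (by have h : min s 0 ≤ 0 := min_le_right s 0; linarith)
  have hKM : ∀ s : ℝ, K s ≤ M₁ := fun s =>
    hkM _ (by have h : min s 0 ≤ 0 := min_le_right s 0; linarith)
  have hKexp : ∀ s : ℝ, s ≤ 0 → K s ≤ μ t * Real.exp (ϖ * s) / ϖ := by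
    intro s hs
    rw [hKeq s hs]
    have := hB (t - s) (by linarith)
    calc k (t - s) ≤ μ t * Real.exp (ϖ * t) * (Real.exp (-(ϖ * (t - s))) / ϖ) := this
      _ = μ t * (Real.exp (ϖ * t) * Real.exp (-(ϖ * (t - s)))) / ϖ := by ring
      _ = μ t * Real.exp (ϖ * s) / ϖ := by
          rw [← Real.exp_add]
          congr 2
          ring
  -- the two L² functions
  set f : ℝ → ℝ := fun s => K s * Real.exp (-(γ / 2) * s) with hf
  set g : ℝ → ℝ := fun s => Real.exp ((γ / 2) * s) * |φ s| with hg
  have hfmeas : Measurable f :=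
    hKmeas.mul (Real.measurable_exp.comp (measurable_const.mul measurable_id))
  have hgmeas : Measurable g :=
    (Real.measurable_exp.comp (measurable_const.mul measurable_id)).mul hφm.abs
  have hfnn : ∀ s, 0 ≤ f s := fun s => mul_nonneg (hK0 s) (Real.exp_pos _).le
  have hgnn : ∀ s, 0 ≤ g s := fun s => mul_nonneg (Real.exp_pos _).le (abs_nonneg _)
  -- g² equals the weighted integrand
  have hg2eq : ∀ s : ℝ, g s ^ 2 = Real.exp (γ * s) * φ s ^ 2 := by
    intro s
    have h1 : Real.exp (γ / 2 * s) ^ 2 = Real.exp (γ * s) := by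
      rw [sq, ← Real.exp_add]; congr 1; ring
    simp only [hg, mul_pow, sq_abs, h1]
  have hg2int : IntegrableOn (fun s => g s ^ 2) (Iic (0:ℝ)) := by
    refine hφint.congr_fun (fun s _ => (hg2eq s).symm) measurableSet_Iic
  -- f² bound and integrability
  have hf2bound : ∀ s ∈ Iic (0:ℝ), f s ^ 2 ≤ M₁ * μ t / ϖ * Real.exp ((ϖ - γ) * s) := by
    intro s hs
    have hs0 : s ≤ (0:ℝ) := hs
    have h1 := hK0 s
    have h2 := hKM s
    have h3 := hKexp s hs0
    have hee : Real.exp ((ϖ - γ) * s) = Real.exp (ϖ * s) * Real.exp (-γ * s) := by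
      rw [← Real.exp_add]; congr 1; ring
    have hexp2 : Real.exp (-(γ / 2) * s) ^ 2 = Real.exp (-γ * s) := by
      rw [sq, ← Real.exp_add]; congr 1; ring
    have : f s ^ 2 = K s * K s * Real.exp (-γ * s) := by
      simp only [hf]; rw [mul_pow, hexp2, sq]
    rw [this, hee]
    have h4 : K s * K s ≤ M₁ * (μ t * Real.exp (ϖ * s) / ϖ) :=
      mul_le_mul h2 h3 h1 hM₁0
    have h5 := (Real.exp_pos (-γ * s)).le
    calc K s * K s * Real.exp (-γ * s)
        ≤ M₁ * (μ t * Real.exp (ϖ * s) / ϖ) * Real.exp (-γ * s) :=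
          mul_le_mul_of_nonneg_right h4 h5
      _ = M₁ * μ t / ϖ * (Real.exp (ϖ * s) * Real.exp (-γ * s)) := by ring
  have hexpint : IntegrableOn (fun s : ℝ => Real.exp ((ϖ - γ) * s)) (Iic (0:ℝ)) :=
    aux_integrableOn_exp_Iic hϖγ
  have hf2int : IntegrableOn (fun s => f s ^ 2) (Iic (0:ℝ)) := by
    refine Integrable.mono' (hexpint.const_mul (M₁ * μ t / ϖ))
      ((hfmeas.pow_const 2).aestronglyMeasurable) ?_
    refine (ae_restrict_iff' measurableSet_Iic).2 (Filter.Eventually.of_forall fun s hs => ?_)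
    rw [Real.norm_eq_abs, abs_of_nonneg (sq_nonneg _)]
    exact hf2bound s hs
  -- Cauchy-Schwarz
  have h2e : (ENNReal.ofReal (2:ℝ)) = 2 := by norm_num
  have hfL2 : MemLp f (ENNReal.ofReal (2:ℝ)) (volume.restrict (Iic (0:ℝ))) := by
    rw [h2e, memLp_two_iff_integrable_sq hfmeas.aestronglyMeasurable]
    exact hf2int
  have hgL2 : MemLp g (ENNReal.ofReal (2:ℝ)) (volume.restrict (Iic (0:ℝ))) := by
    rw [h2e, memLp_two_iff_integrable_sq hgmeas.aestronglyMeasurable]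
    exact hg2int
  have hconj : Real.HolderConjugate 2 2 := Real.HolderConjugate.two_two
  have hCS := MeasureTheory.integral_mul_le_Lp_mul_Lq_of_nonneg hconj
    (Filter.Eventually.of_forall hfnn) (Filter.Eventually.of_forall hgnn) hfL2 hgL2
  -- rewrite rpow as sqrt and pow
  have hrw : ∀ h : ℝ → ℝ, (∫ s in Iic (0:ℝ), h s ^ (2:ℝ)) ^ (1/(2:ℝ))
      = Real.sqrt (∫ s in Iic (0:ℝ), h s ^ 2) := by
    intro h
    rw [Real.sqrt_eq_rpow]
    congr 1
    refine integral_congr_ae (Filter.Eventually.of_forall fun s => ?_)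
    exact Real.rpow_two (h s)
  rw [hrw f, hrw g] at hCS
  -- LHS equality
  have hLHS : ∫ s in Iic (0:ℝ), k (t - s) * |φ s| = ∫ s in Iic (0:ℝ), f s * g s := by
    refine setIntegral_congr_fun measurableSet_Iic fun s hs => ?_
    have hs0 : s ≤ (0:ℝ) := hs
    simp only [hf, hg]
    rw [hKeq s hs0]
    have : Real.exp (-(γ / 2) * s) * Real.exp ((γ / 2) * s) = 1 := by
      rw [← Real.exp_add]
      have : -(γ / 2) * s + γ / 2 * s = 0 := by ring
      rw [this, Real.exp_zero]
    calc k (t - s) * |φ s| = k (t - s) * (Real.exp (-(γ / 2) * s) * Real.exp ((γ / 2) * s)) * |φ s| := by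
          rw [this, mul_one]
      _ = k (t - s) * Real.exp (-(γ / 2) * s) * (Real.exp ((γ / 2) * s) * |φ s|) := by ring
  -- bound on ∫ f²
  have hf2val : ∫ s in Iic (0:ℝ), f s ^ 2 ≤ M₁ * μ t / (ϖ * (ϖ - γ)) := by
    calc ∫ s in Iic (0:ℝ), f s ^ 2
        ≤ ∫ s in Iic (0:ℝ), M₁ * μ t / ϖ * Real.exp ((ϖ - γ) * s) :=
          setIntegral_mono_on hf2int (hexpint.const_mul _) measurableSet_Iic hf2bound
      _ = M₁ * μ t / ϖ * (1 / (ϖ - γ)) := by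
          rw [integral_const_mul, aux_int_exp_Iic hϖγ]
      _ = M₁ * μ t / (ϖ * (ϖ - γ)) := by field_simp
  have hg2val : ∫ s in Iic (0:ℝ), g s ^ 2 = ∫ s in Iic (0:ℝ), Real.exp (γ * s) * φ s ^ 2 :=
    setIntegral_congr_fun measurableSet_Iic fun s _ => hg2eq s
  -- final assembly
  have hsq1 : Real.sqrt (∫ s in Iic (0:ℝ), f s ^ 2)
      ≤ Real.sqrt M₁ * Real.sqrt (μ t) / (Real.sqrt ϖ * Real.sqrt (ϖ - γ)) := by
    have := Real.sqrt_le_sqrt hf2val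
    calc Real.sqrt (∫ s in Iic (0:ℝ), f s ^ 2)
        ≤ Real.sqrt (M₁ * μ t / (ϖ * (ϖ - γ))) := this
      _ = Real.sqrt M₁ * Real.sqrt (μ t) / (Real.sqrt ϖ * Real.sqrt (ϖ - γ)) := by
          rw [Real.sqrt_div (mul_nonneg hM₁0 hμt), Real.sqrt_mul hM₁0, Real.sqrt_mul hϖ.le]
  calc ∫ s in Iic (0:ℝ), k (t - s) * |φ s|
      = ∫ s in Iic (0:ℝ), f s * g s := hLHS
    _ ≤ Real.sqrt (∫ s in Iic (0:ℝ), f s ^ 2) * Real.sqrt (∫ s in Iic (0:ℝ), g s ^ 2) := hCS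
    _ ≤ (Real.sqrt M₁ * Real.sqrt (μ t) / (Real.sqrt ϖ * Real.sqrt (ϖ - γ))) *
          Real.sqrt (∫ s in Iic (0:ℝ), Real.exp (γ * s) * φ s ^ 2) := by
        rw [hg2val]
        exact mul_le_mul_of_nonneg_right hsq1 (Real.sqrt_nonneg _)
end

section
/- Let 0 < γ < ϖ, let μ ∈ C¹((0,∞)) ∩ L¹((0,∞)) with μ ≥ 0 and μ' + ϖμ ≤ 0, and let φ, ψ : (−∞,0] → ℝ be measurable with finite weighted norms ∫_{−∞}^0 e^{γ r} φ(r)² dr and ∫_{−∞}^0 e^{γ r} ψ(r)² dr. Then with (Jχ)(s) = ∫_{−s}^0 χ(r) dr and K_μ = e^{γ}∫_0^1 μ(s)ds + μ(1)e^{ϖ}(ϖ−γ)^{−2}: ∫_0^∞ μ(s)·(J(φ−ψ))(s)² ds ≤ 2K_μ·(∫_{−∞}^0 e^{γ r}φ(r)² dr + ∫_{−∞}^0 e^{γ r}ψ(r)² dr). -/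
open Real Set MeasureTheory Filter Topology

private lemma aux_cs {ν : Measure ℝ} [IsFiniteMeasure ν] {f : ℝ → ℝ}
    (hm : AEStronglyMeasurable f ν) (hf : Integrable (fun x => f x ^ 2) ν) :
    (∫ x, f x ∂ν) ^ 2 ≤ (ν Set.univ).toReal * ∫ x, f x ^ 2 ∂ν := by
  have h2 : MemLp f 2 ν := (memLp_two_iff_integrable_sq hm).2 hf
  have hpq : Real.HolderConjugate 2 2 := Real.HolderConjugate.two_two
  have h1 : MemLp (fun _ : ℝ => (1:ℝ)) (ENNReal.ofReal 2) ν := by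
    simpa using memLp_const (μ := ν) (1:ℝ)
  have habsf : MemLp (fun x => |f x|) (ENNReal.ofReal 2) ν := by
    have := h2.norm
    simpa [Real.norm_eq_abs] using this
  have hcs := integral_mul_le_Lp_mul_Lq_of_nonneg hpq
    (f := fun _ : ℝ => (1:ℝ)) (g := fun x => |f x|)
    (Filter.Eventually.of_forall fun _ => zero_le_one)
    (Filter.Eventually.of_forall fun x => abs_nonneg _) h1 habsf
  simp only [one_mul] at hcs
  have h1p : ∫ _ : ℝ, (1:ℝ) ^ (2:ℝ) ∂ν = (ν Set.univ).toReal := by simp [measureReal_def]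
  have h2p : ∫ x, |f x| ^ (2:ℝ) ∂ν = ∫ x, f x ^ 2 ∂ν := by
    refine integral_congr_ae (Filter.Eventually.of_forall fun x => ?_)
    show |f x| ^ (2:ℝ) = f x ^ 2
    rw [show (2:ℝ) = ((2:ℕ):ℝ) by norm_num, Real.rpow_natCast, sq_abs]
  rw [h1p, h2p] at hcs
  have habs : |∫ x, f x ∂ν| ≤ ∫ x, |f x| ∂ν := by
    simpa [Real.norm_eq_abs] using norm_integral_le_integral_norm (μ := ν) f
  have hI0 : 0 ≤ ∫ x, f x ^ 2 ∂ν := integral_nonneg fun x => sq_nonneg _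
  have hM0 : (0:ℝ) ≤ (ν Set.univ).toReal := ENNReal.toReal_nonneg
  calc (∫ x, f x ∂ν) ^ 2 = |∫ x, f x ∂ν| ^ 2 := (sq_abs _).symm
    _ ≤ (∫ x, |f x| ∂ν) ^ 2 := by
        apply pow_le_pow_left₀ (abs_nonneg _) habs
    _ ≤ ((ν Set.univ).toReal ^ (1/(2:ℝ)) * (∫ x, f x ^ 2 ∂ν) ^ (1/(2:ℝ))) ^ 2 := by
        apply pow_le_pow_left₀ (integral_nonneg fun x => abs_nonneg _) hcs
    _ = (ν Set.univ).toReal * ∫ x, f x ^ 2 ∂ν := by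
        rw [mul_pow, ← Real.rpow_natCast ((ν Set.univ).toReal ^ (1/(2:ℝ))) 2,
          ← Real.rpow_natCast ((∫ x, f x ^ 2 ∂ν) ^ (1/(2:ℝ))) 2,
          ← Real.rpow_mul hM0, ← Real.rpow_mul hI0]
        norm_num

private lemma aux_decay (ϖ : ℝ) (μ μ' : ℝ → ℝ)
    (hderiv : ∀ s ∈ Set.Ioi (0:ℝ), HasDerivAt μ (μ' s) s)
    (hineq : ∀ s ∈ Set.Ioi (0:ℝ), μ' s + ϖ * μ s ≤ 0) :
    ∀ s ≥ (1:ℝ), μ s ≤ μ 1 * Real.exp (ϖ * (1 - s)) := by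
  intro s hs
  set g : ℝ → ℝ := fun t => Real.exp (ϖ * t) * μ t with hg
  have hgd : ∀ t ∈ Set.Ioi (0:ℝ), HasDerivAt g (Real.exp (ϖ * t) * (μ' t + ϖ * μ t)) t := by
    intro t ht
    have h1 : HasDerivAt (fun t => Real.exp (ϖ * t)) (ϖ * Real.exp (ϖ * t)) t := by
      simpa [mul_comm, Function.comp_def] using (Real.hasDerivAt_exp (ϖ * t)).comp t ((hasDerivAt_id t).const_mul ϖ)
    have := h1.mul (hderiv t ht)
    exact this.congr_deriv (by ring)
  have hanti : AntitoneOn g (Set.Ici (1:ℝ)) := by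
    apply antitoneOn_of_deriv_nonpos (convex_Ici 1)
    · intro t ht
      exact (hgd t (show (0:ℝ) < t from lt_of_lt_of_le one_pos ht)).continuousAt.continuousWithinAt
    · intro t ht
      rw [interior_Ici] at ht
      exact (hgd t (show (0:ℝ) < t from lt_trans one_pos ht)).differentiableAt.differentiableWithinAt
    · intro t ht
      rw [interior_Ici] at ht
      have h0 : (0:ℝ) < t := lt_trans one_pos ht
      rw [(hgd t h0).deriv]
      exact mul_nonpos_of_nonneg_of_nonpos (Real.exp_pos _).le (hineq t h0)
  have := hanti (Set.self_mem_Ici) hs hs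
  have hepos : (0:ℝ) < Real.exp (ϖ * s) := Real.exp_pos _
  rw [hg] at this
  simp only at this
  have h2 : μ s ≤ (Real.exp (ϖ * 1) * μ 1) / Real.exp (ϖ * s) := by
    rw [le_div_iff₀ hepos]
    linarith [this]
  calc μ s ≤ (Real.exp (ϖ * 1) * μ 1) / Real.exp (ϖ * s) := h2
    _ = μ 1 * Real.exp (ϖ * (1 - s)) := by
        rw [div_eq_iff (ne_of_gt hepos), mul_assoc, ← Real.exp_add,
          show ϖ*(1-s)+ϖ*s = ϖ*1 by ring]
        ring

private lemma aux_tail (a : ℝ) (ha : 0 < a) :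
    IntegrableOn (fun s => s * Real.exp (-(a*s))) (Set.Ioi (1:ℝ)) ∧
    ∫ s in Set.Ioi (1:ℝ), s * Real.exp (-(a*s)) ≤ (a^2)⁻¹ := by
  set F : ℝ → ℝ := fun s => -(s/a + 1/a^2) * Real.exp (-(a*s)) with hF
  have hFd : ∀ s : ℝ, HasDerivAt F (s * Real.exp (-(a*s))) s := by
    intro s
    have he : HasDerivAt (fun s => Real.exp (-(a*s))) (-a * Real.exp (-(a*s))) s := by
      simpa [mul_comm, Function.comp_def] using (Real.hasDerivAt_exp (-(a*s))).comp s
        (((hasDerivAt_id s).const_mul a).neg)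
    have hl : HasDerivAt (fun s : ℝ => -(s/a + 1/a^2)) (-(1/a)) s :=
      (((hasDerivAt_id s).div_const a).add_const (1/a^2)).neg
    have := hl.mul he
    refine this.congr_deriv ?_
    field_simp
    ring
  have hlim : Tendsto F atTop (𝓝 0) := by
    have h1 : Tendsto (fun s : ℝ => s * Real.exp (-(a*s))) atTop (𝓝 0) := by
      have := tendsto_rpow_mul_exp_neg_mul_atTop_nhds_zero 1 a ha
      refine this.congr fun x => by rw [Real.rpow_one]; ring_nf
    have h2 : Tendsto (fun s : ℝ => Real.exp (-(a*s))) atTop (𝓝 0) := by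
      have := Real.tendsto_exp_neg_atTop_nhds_zero.comp (tendsto_id.const_mul_atTop ha)
      refine this.congr fun x => by simp [Function.comp]
    have := ((h1.const_mul (-(1/a))).add (h2.const_mul (-(1/a^2))))
    simpa using this.congr fun x => by rw [hF]; ring
  have hint : IntegrableOn (fun s => s * Real.exp (-(a*s))) (Set.Ioi (1:ℝ)) := by
    apply integrableOn_Ioi_deriv_of_nonneg' (fun x _ => hFd x)
      (fun x hx => mul_nonneg (le_of_lt (lt_trans one_pos hx)) (Real.exp_pos _).le) hlim
  refine ⟨hint, ?_⟩
  have := integral_Ioi_of_hasDerivAt_of_tendsto' (fun x _ => hFd x) hint hlim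
  rw [this]
  have hexp := Real.add_one_le_exp a
  have h1 : F 1 = -((1/a + 1/a^2) * Real.exp (-a)) := by rw [hF]; ring_nf
  rw [h1]
  have hea : (0:ℝ) < Real.exp (-a) := Real.exp_pos _
  have ha2 : (0:ℝ) < a^2 := by positivity
  have hprod : Real.exp (-a) * Real.exp a = 1 := by rw [← Real.exp_add]; simp
  have h4 : (a + 1) * Real.exp (-a) ≤ 1 := by nlinarith [hexp, hea.le]
  have : (1/a + 1/a^2) * Real.exp (-a) ≤ (a^2)⁻¹ := by
    have heq : (1/a + 1/a^2) * Real.exp (-a) = ((a+1) * Real.exp (-a))/a^2 := by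
      field_simp
    rw [heq]
    calc ((a+1) * Real.exp (-a))/a^2 ≤ 1/a^2 := by gcongr
      _ = (a^2)⁻¹ := one_div _
  linarith

theorem stmt_19 (ϖ γ : ℝ) (hγ : 0 < γ) (hγϖ : γ < ϖ) (μ μ' : ℝ → ℝ)
    (hderiv : ∀ s ∈ Set.Ioi (0:ℝ), HasDerivAt μ (μ' s) s)
    (hcont : ContinuousOn μ' (Set.Ioi (0:ℝ)))
    (hint : IntegrableOn μ (Set.Ioi (0:ℝ)))
    (hnonneg : ∀ s ∈ Set.Ioi (0:ℝ), 0 ≤ μ s)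
    (hineq : ∀ s ∈ Set.Ioi (0:ℝ), μ' s + ϖ * μ s ≤ 0)
    (φ ψ : ℝ → ℝ) (hφm : Measurable φ) (hψm : Measurable ψ)
    (hφint : IntegrableOn (fun r => Real.exp (γ * r) * φ r ^ 2) (Set.Iic (0:ℝ)))
    (hψint : IntegrableOn (fun r => Real.exp (γ * r) * ψ r ^ 2) (Set.Iic (0:ℝ))) :
    ∫ s in Set.Ioi (0:ℝ), μ s * (∫ r in Set.Ioc (-s) (0:ℝ), (φ r - ψ r)) ^ 2 ≤
      2 * (Real.exp γ * ∫ s in Set.Ioc (0:ℝ) 1, μ s + μ 1 * Real.exp ϖ * ((ϖ - γ) ^ 2)⁻¹) *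
        ((∫ r in Set.Iic (0:ℝ), Real.exp (γ * r) * φ r ^ 2) +
          ∫ r in Set.Iic (0:ℝ), Real.exp (γ * r) * ψ r ^ 2) := by
  have ha : 0 < ϖ - γ := sub_pos.2 hγϖ
  set χ : ℝ → ℝ := fun r => φ r - ψ r with hχdef
  have hχm : Measurable χ := hφm.sub hψm
  have hCφ0 : 0 ≤ ∫ r in Set.Iic (0:ℝ), Real.exp (γ*r) * φ r^2 :=
    setIntegral_nonneg measurableSet_Iic fun r _ => mul_nonneg (Real.exp_pos _).le (sq_nonneg _)
  have hCψ0 : 0 ≤ ∫ r in Set.Iic (0:ℝ), Real.exp (γ*r) * ψ r^2 :=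
    setIntegral_nonneg measurableSet_Iic fun r _ => mul_nonneg (Real.exp_pos _).le (sq_nonneg _)
  set C : ℝ := (∫ r in Set.Iic (0:ℝ), Real.exp (γ*r) * φ r^2)
      + ∫ r in Set.Iic (0:ℝ), Real.exp (γ*r) * ψ r^2 with hCdef
  have hC0 : 0 ≤ C := add_nonneg hCφ0 hCψ0
  have hwm : Measurable (fun r => Real.exp (γ*r) * χ r^2) :=
    ((Real.measurable_exp.comp (measurable_id.const_mul γ))).mul (hχm.pow_const 2)
  have hwint : IntegrableOn (fun r => Real.exp (γ*r) * χ r^2) (Set.Iic 0) := by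
    refine Integrable.mono' ((hφint.add hψint).const_mul 2) hwm.aestronglyMeasurable ?_
    refine ae_of_all _ fun r => ?_
    rw [Real.norm_eq_abs, abs_of_nonneg (by positivity)]
    show Real.exp (γ*r) * (φ r - ψ r)^2 ≤ 2 * (Real.exp (γ*r) * φ r^2 + Real.exp (γ*r) * ψ r^2)
    nlinarith [sq_nonneg (φ r + ψ r), (Real.exp_pos (γ*r)).le, sq_nonneg (φ r - ψ r)]
  have hwle : ∫ r in Set.Iic (0:ℝ), Real.exp (γ*r) * χ r^2 ≤ 2*C := by
    have h := integral_mono hwint ((hφint.add hψint).const_mul 2) ?_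
    · refine h.trans_eq ?_
      simp only [Pi.add_apply]
      rw [integral_const_mul _ _, integral_add hφint hψint, hCdef]
    · intro r
      show Real.exp (γ*r) * (φ r - ψ r)^2 ≤ 2 * (Real.exp (γ*r) * φ r^2 + Real.exp (γ*r) * ψ r^2)
      nlinarith [sq_nonneg (φ r + ψ r), (Real.exp_pos (γ*r)).le]
  -- Step B : Cauchy-Schwarz bound
  have hkey : ∀ s ∈ Set.Ioi (0:ℝ), (∫ r in Set.Ioc (-s) (0:ℝ), χ r)^2
      ≤ s * Real.exp (γ*s) * (2*C) := by
    intro s hs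
    have hs0 : (0:ℝ) < s := hs
    have hsub : Set.Ioc (-s) (0:ℝ) ⊆ Set.Iic 0 := Set.Ioc_subset_Iic_self
    have hw2 : IntegrableOn (fun r => Real.exp (γ*r) * χ r^2) (Set.Ioc (-s) 0) :=
      hwint.mono_set hsub
    have hptw : ∀ r ∈ Set.Ioc (-s) (0:ℝ),
        χ r^2 ≤ Real.exp (γ*s) * (Real.exp (γ*r) * χ r^2) := by
      intro r hr
      have h1 : (1:ℝ) ≤ Real.exp (γ*s) * Real.exp (γ*r) := by
        rw [← Real.exp_add]
        exact Real.one_le_exp (by nlinarith [hr.1, hγ.le])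
      nlinarith [sq_nonneg (χ r)]
    have hχ2 : IntegrableOn (fun r => χ r^2) (Set.Ioc (-s) 0) := by
      refine Integrable.mono' (hw2.const_mul (Real.exp (γ*s)))
        ((hχm.pow_const 2).aestronglyMeasurable) ?_
      rw [ae_restrict_iff' measurableSet_Ioc]
      refine ae_of_all _ fun r hr => ?_
      rw [Real.norm_eq_abs, abs_of_nonneg (sq_nonneg _)]
      exact hptw r hr
    haveI : IsFiniteMeasure (volume.restrict (Set.Ioc (-s) (0:ℝ))) :=
      ⟨by rw [Measure.restrict_apply_univ]; exact measure_Ioc_lt_top⟩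
    have hcs := aux_cs (hχm.aestronglyMeasurable) hχ2
    have hμs : ((volume.restrict (Set.Ioc (-s) (0:ℝ))) Set.univ).toReal = s := by
      rw [Measure.restrict_apply_univ, Real.volume_Ioc]
      rw [show (0:ℝ) - (-s) = s by ring, ENNReal.toReal_ofReal hs0.le]
    rw [hμs] at hcs
    have hstep1 : ∫ r in Set.Ioc (-s) (0:ℝ), χ r^2
        ≤ Real.exp (γ*s) * ∫ r in Set.Ioc (-s) (0:ℝ), Real.exp (γ*r) * χ r^2 := by
      rw [← integral_const_mul _ _]
      exact setIntegral_mono_on hχ2 (hw2.const_mul _) measurableSet_Ioc hptw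
    have hstep2 : ∫ r in Set.Ioc (-s) (0:ℝ), Real.exp (γ*r) * χ r^2 ≤ 2*C := by
      refine le_trans (setIntegral_mono_set hwint ?_ (HasSubset.Subset.eventuallyLE hsub)) hwle
      exact ae_of_all _ fun r => mul_nonneg (Real.exp_pos _).le (sq_nonneg _)
    calc (∫ r in Set.Ioc (-s) (0:ℝ), χ r)^2 ≤ s * ∫ r in Set.Ioc (-s) (0:ℝ), χ r^2 := hcs
      _ ≤ s * (Real.exp (γ*s) * (2*C)) := by
          refine mul_le_mul_of_nonneg_left ?_ hs0.le
          exact hstep1.trans (mul_le_mul_of_nonneg_left hstep2 (Real.exp_pos _).le)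
      _ = s * Real.exp (γ*s) * (2*C) := by ring
  have hμc : ContinuousOn μ (Set.Ioi 0) :=
    fun x hx => (hderiv x hx).continuousAt.continuousWithinAt
  have hμ10 : 0 ≤ μ 1 := hnonneg 1 (by norm_num)
  have hdecay := aux_decay ϖ μ μ' hderiv hineq
  obtain ⟨htint, htval⟩ := aux_tail (ϖ - γ) ha
  set G : ℝ → ℝ := fun s => μ s * (s * Real.exp (γ*s) * (2*C)) with hGdef
  -- integrability of G on (0,1]
  have hG1 : IntegrableOn G (Set.Ioc (0:ℝ) 1) := by
    refine Integrable.mono' ((hint.mono_set Set.Ioc_subset_Ioi_self).const_mul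
      (Real.exp γ * (2*C))) ?_ ?_
    · exact ((hμc.mono Set.Ioc_subset_Ioi_self).aestronglyMeasurable measurableSet_Ioc).mul
        ((continuous_id.mul (Real.continuous_exp.comp (continuous_const.mul continuous_id))).mul continuous_const).aestronglyMeasurable
    · rw [ae_restrict_iff' measurableSet_Ioc]
      refine ae_of_all _ fun s hsm => ?_
      have hμ0 := hnonneg s hsm.1
      have hs0 : (0:ℝ) < s := hsm.1
      rw [Real.norm_eq_abs, abs_of_nonneg
        (mul_nonneg hμ0 (mul_nonneg (mul_nonneg hs0.le (Real.exp_pos _).le) (by linarith)))]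
      have hee : Real.exp (γ*s) ≤ Real.exp γ :=
        Real.exp_le_exp.2 (by nlinarith [hsm.2, hγ.le])
      have h1 : s * Real.exp (γ*s) ≤ Real.exp γ := by
        nlinarith [(Real.exp_pos (γ*s)).le, hsm.2]
      calc μ s * (s * Real.exp (γ*s) * (2*C)) ≤ μ s * (Real.exp γ * (2*C)) := by
            refine mul_le_mul_of_nonneg_left ?_ hμ0
            exact mul_le_mul_of_nonneg_right h1 (by linarith)
        _ = Real.exp γ * (2*C) * μ s := by ring
  -- integrability of G on (1,∞)
  have hGbound : ∀ s ∈ Set.Ioi (1:ℝ), G s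
      ≤ μ 1 * Real.exp ϖ * (2*C) * (s * Real.exp (-((ϖ-γ)*s))) := by
    intro s hs
    have hs1 : (1:ℝ) ≤ s := le_of_lt hs
    have hs0 : (0:ℝ) < s := lt_trans one_pos hs
    have hd := hdecay s hs1
    have hexpeq : Real.exp (ϖ*(1-s)) * Real.exp (γ*s) = Real.exp ϖ * Real.exp (-((ϖ-γ)*s)) := by
      rw [← Real.exp_add, ← Real.exp_add]
      congr 1
      ring
    have h2 : μ s * (s * Real.exp (γ*s) * (2*C))
        ≤ (μ 1 * Real.exp (ϖ*(1-s))) * (s * Real.exp (γ*s) * (2*C)) := by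
      refine mul_le_mul_of_nonneg_right hd ?_
      exact mul_nonneg (mul_nonneg hs0.le (Real.exp_pos _).le) (by linarith)
    refine h2.trans_eq ?_
    rw [show (μ 1 * Real.exp (ϖ*(1-s))) * (s * Real.exp (γ*s) * (2*C))
        = μ 1 * (Real.exp (ϖ*(1-s)) * Real.exp (γ*s)) * (2*C) * s by ring, hexpeq]
    ring
  have hG2 : IntegrableOn G (Set.Ioi (1:ℝ)) := by
    refine Integrable.mono' (htint.const_mul (μ 1 * Real.exp ϖ * (2*C))) ?_ ?_
    · refine (((hμc.mono (Set.Ioi_subset_Ioi zero_le_one)).aestronglyMeasurable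
        measurableSet_Ioi).mul ((continuous_id.mul (Real.continuous_exp.comp (continuous_const.mul continuous_id))).mul continuous_const).aestronglyMeasurable)
    · rw [ae_restrict_iff' measurableSet_Ioi]
      refine ae_of_all _ fun s hsm => ?_
      have hs0 : (0:ℝ) < s := lt_trans one_pos hsm
      have hμ0 := hnonneg s (show (0:ℝ) < s from lt_trans one_pos hsm)
      rw [Real.norm_eq_abs, abs_of_nonneg
        (mul_nonneg hμ0 (mul_nonneg (mul_nonneg hs0.le (Real.exp_pos _).le) (by linarith)))]
      exact hGbound s hsm
  have hGint : IntegrableOn G (Set.Ioi (0:ℝ)) := by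
    rw [← Set.Ioc_union_Ioi_eq_Ioi (zero_le_one (α := ℝ))]
    exact hG1.union hG2
  -- main comparison
  have hmain : (∫ s in Set.Ioi (0:ℝ), μ s * (∫ r in Set.Ioc (-s) (0:ℝ), χ r)^2)
      ≤ ∫ s in Set.Ioi (0:ℝ), G s := by
    refine integral_mono_of_nonneg ?_ hGint ?_
    · filter_upwards [ae_restrict_mem measurableSet_Ioi] with s hs
      exact mul_nonneg (hnonneg s hs) (sq_nonneg _)
    · filter_upwards [ae_restrict_mem measurableSet_Ioi] with s hs
      exact mul_le_mul_of_nonneg_left (hkey s hs) (hnonneg s hs)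
  -- split and bound the G integral
  have hsplit : ∫ s in Set.Ioi (0:ℝ), G s
      = (∫ s in Set.Ioc (0:ℝ) 1, G s) + ∫ s in Set.Ioi (1:ℝ), G s := by
    rw [← setIntegral_union (Set.Ioc_disjoint_Ioi le_rfl) measurableSet_Ioi hG1 hG2,
      Set.Ioc_union_Ioi_eq_Ioi zero_le_one]
  have hbound1 : ∫ s in Set.Ioc (0:ℝ) 1, G s
      ≤ Real.exp γ * (2*C) * ∫ s in Set.Ioc (0:ℝ) 1, μ s := by
    rw [← integral_const_mul _ _]
    refine setIntegral_mono_on hG1 (((hint.mono_set Set.Ioc_subset_Ioi_self).const_mul _))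
      measurableSet_Ioc fun s hsm => ?_
    have hμ0 := hnonneg s hsm.1
    have hs0 : (0:ℝ) < s := hsm.1
    have h1 : s * Real.exp (γ*s) ≤ Real.exp γ := by
      have hee : Real.exp (γ*s) ≤ Real.exp γ :=
        Real.exp_le_exp.2 (by nlinarith [hsm.2, hγ.le])
      nlinarith [(Real.exp_pos (γ*s)).le, hsm.2]
    calc μ s * (s * Real.exp (γ*s) * (2*C)) ≤ μ s * (Real.exp γ * (2*C)) := by
          refine mul_le_mul_of_nonneg_left ?_ hμ0
          exact mul_le_mul_of_nonneg_right h1 (by linarith)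
      _ = Real.exp γ * (2*C) * μ s := by ring
  have hbound2 : ∫ s in Set.Ioi (1:ℝ), G s
      ≤ μ 1 * Real.exp ϖ * (2*C) * ((ϖ-γ)^2)⁻¹ := by
    have hstep : ∫ s in Set.Ioi (1:ℝ), G s
        ≤ ∫ s in Set.Ioi (1:ℝ), μ 1 * Real.exp ϖ * (2*C) * (s * Real.exp (-((ϖ-γ)*s))) := by
      refine setIntegral_mono_on hG2 (htint.const_mul _) measurableSet_Ioi hGbound
    refine hstep.trans ?_
    rw [integral_const_mul _ _]
    refine mul_le_mul_of_nonneg_left htval ?_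
    have : (0:ℝ) < Real.exp ϖ := Real.exp_pos _
    positivity
  -- combine
  have hμint0 : 0 ≤ ∫ s in Set.Ioc (0:ℝ) 1, μ s :=
    setIntegral_nonneg measurableSet_Ioc fun s hsm => hnonneg s hsm.1
  calc ∫ s in Set.Ioi (0:ℝ), μ s * (∫ r in Set.Ioc (-s) (0:ℝ), (φ r - ψ r)) ^ 2
      ≤ ∫ s in Set.Ioi (0:ℝ), G s := hmain
    _ = (∫ s in Set.Ioc (0:ℝ) 1, G s) + ∫ s in Set.Ioi (1:ℝ), G s := hsplit
    _ ≤ Real.exp γ * (2*C) * (∫ s in Set.Ioc (0:ℝ) 1, μ s)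
        + μ 1 * Real.exp ϖ * (2*C) * ((ϖ-γ)^2)⁻¹ := add_le_add hbound1 hbound2
    _ ≤ 2 * (Real.exp γ * ∫ s in Set.Ioc (0:ℝ) 1, μ s + μ 1 * Real.exp ϖ * ((ϖ - γ) ^ 2)⁻¹)
        * C := by
        have hconst : (∫ s in Set.Ioc (0:ℝ) 1, (μ s + μ 1 * Real.exp ϖ * ((ϖ-γ)^2)⁻¹))
            = (∫ s in Set.Ioc (0:ℝ) 1, μ s) + μ 1 * Real.exp ϖ * ((ϖ-γ)^2)⁻¹ := by
          rw [integral_add (hint.mono_set Set.Ioc_subset_Ioi_self)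
            (integrableOn_const measure_Ioc_lt_top.ne), setIntegral_const]
          simp [Real.volume_Ioc]
        show _ ≤ 2 * (Real.exp γ * ∫ s in Set.Ioc (0:ℝ) 1,
          (μ s + μ 1 * Real.exp ϖ * ((ϖ-γ)^2)⁻¹)) * C
        rw [hconst]
        have hc0 : 0 ≤ μ 1 * Real.exp ϖ * ((ϖ-γ)^2)⁻¹ := by positivity
        have he1 : (1:ℝ) ≤ Real.exp γ := Real.one_le_exp hγ.le
        nlinarith [hμint0, hC0, hc0, he1,
          mul_nonneg (mul_nonneg (sub_nonneg.2 he1) hc0) hC0]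
end
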